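/- arXiv:1507.08251 — 3 statements merged into one kernel-verified Lean document; each statement's English description precedes it below -/
import Mathlib

section
/- For h ∈ H(T), the pointwise limit A^∞ h := lim_n Aⁿ h satisfies (Aⁿh)* ∘ i ≤ A^∞ h ≤ Aⁿ h for every n ≥ 1, and dom(A^∞ h) = dom(h) ∩ dom(h* ∘ i). -/
open NormedSpace

noncomputable section

/-- Convexity for extended-real-valued functions. -/
def EConvexOn {E : Type*} [AddCommMonoid E] [Module ℝ E] (f : E → EReal) : Prop :=
  ∀ x y : E, ∀ a b : ℝ, 0 ≤ a → 0 ≤ b → a + b = 1 →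
    f (a • x + b • y) ≤ (a : EReal) * f x + (b : EReal) * f y

/-- Properness: somewhere finite and never `⊥` (i.e. values in `ℝ ∪ {+∞}`). -/
def EProper {E : Type*} (f : E → EReal) : Prop :=
  (∃ x, f x ≠ ⊤) ∧ ∀ x, f x ≠ ⊥

variable {X : Type*} [NormedAddCommGroup X] [NormedSpace ℝ X]

/-- The ε-subdifferential of `f : X → ℝ ∪ {+∞}` at `x`. -/
def epsSubdiff (f : X → EReal) (ε : ℝ) (x : X) : Set (StrongDual ℝ X) :=
  {p | f x ≠ ⊤ ∧ ∀ y : X, f x + ((p (y - x) : ℝ) : EReal) ≤ f y + (ε : EReal)}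

/-- The Fenchel conjugate of `f : X → ℝ ∪ {+∞}`. -/
def fconj (f : X → EReal) (p : StrongDual ℝ X) : EReal :=
  ⨆ y : X, ((p y : ℝ) : EReal) - f y

/-- The duality pairing `⟨x, x*⟩` on `X × X*`. -/
def pairing (z : X × StrongDual ℝ X) : ℝ := z.2 z.1

/-- `h* ∘ i`, the conjugate of `h : X × X* → ℝ ∪ {+∞}` with respect to the pairing
`⟨(x,x*),(y*,y)⟩ = ⟨x,y*⟩ + ⟨y,x*⟩`, composed with the swap `i(x,x*) = (x*,x)`. -/
def conjI (h : X × StrongDual ℝ X → EReal) (z : X × StrongDual ℝ X) : EReal :=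
  ⨆ w : X × StrongDual ℝ X, ((z.2 w.1 + w.2 z.1 : ℝ) : EReal) - h w

/-- The averaging map `A h := (1/2)(h + h* ∘ i)`. -/
def Amap (h : X × StrongDual ℝ X → EReal) : X × StrongDual ℝ X → EReal :=
  fun z => (((1 : ℝ)/2 : ℝ) : EReal) * (h z + conjI h z)

/-- Monotone multivalued operator `T : X ⇉ X*`. -/
def IsMonotoneOp (T : X → Set (StrongDual ℝ X)) : Prop :=
  ∀ ⦃x p y q⦄, p ∈ T x → q ∈ T y → 0 ≤ (p - q) (x - y)

/-- Maximally monotone operator. -/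
def IsMaxMonotoneOp (T : X → Set (StrongDual ℝ X)) : Prop :=
  IsMonotoneOp T ∧ ∀ x p, (∀ y q, q ∈ T y → 0 ≤ (p - q) (x - y)) → p ∈ T x

/-- The Fitzpatrick family `H(T)`: lsc convex `h ≥ ⟨·,·⟩` with equality on `gph T`. -/
def InFitzFamily (T : X → Set (StrongDual ℝ X)) (h : X × StrongDual ℝ X → EReal) : Prop :=
  LowerSemicontinuous h ∧ EConvexOn h ∧ (∀ z, (pairing z : EReal) ≤ h z) ∧
    ∀ x p, p ∈ T x → h (x, p) = (pairing (x, p) : EReal)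

/-- The δ-subdifferential of `h : X × X* → ℝ ∪ {+∞}` with respect to the pairing
`⟨(x,x*),(y*,y)⟩ = ⟨x,y*⟩ + ⟨y,x*⟩`. -/
def epsSubdiff2 (h : X × StrongDual ℝ X → EReal) (δ : ℝ) (z : X × StrongDual ℝ X) :
    Set (StrongDual ℝ X × X) :=
  {w | h z ≠ ⊤ ∧ ∀ u : X × StrongDual ℝ X,
    h z + ((w.1 (u.1 - z.1) + (u.2 - z.2) w.2 : ℝ) : EReal) ≤ h u + (δ : EReal)}

/-- The Fenchel–Young function `f^{FY}(x,x*) = f(x) + f*(x*)`. -/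
def FYfn (f : X → EReal) (z : X × StrongDual ℝ X) : EReal := f z.1 + fconj f z.2

/-- The pointwise limit `A^∞ h` of the non-increasing sequence `{Aⁿh}_{n ≥ 1}`,
realized as a pointwise infimum. -/
def AinfMap (h : X × StrongDual ℝ X → EReal) (z : X × StrongDual ℝ X) : EReal :=
  ⨅ n : ℕ, Amap^[n + 1] h z

/-!
Write `π` for the pairing and `g*` for `conjI g`. Let `g` be convex with `g ≥ π` and `g = π` on
`gph T`. Maximal monotonicity of `T` gives `g* ≥ π`, and comparing `g` with `π` along segments
issuing from graph points gives `g* ≤ π` on `gph T`; hence `A g` has the same three properties.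
Since conjugation is convex and `g** ≤ g`, `(A g)* ≤ ½ (g* + g**) ≤ A g`, so `A (A g) ≤ A g`.
Thus the iterates `Aⁿ h`, `n ≥ 1`, decrease, and as conjugation reverses order each of them
dominates the conjugate of every other one, hence the conjugate of each lies below the infimum.
Finally `dom (A g) = dom g ∩ dom g*`, so every iterate has the domain of `A h`.
-/

open Filter Topology

namespace EReal

lemma half_mul_add_self (x : EReal) : ((1 / 2 : ℝ) : EReal) * (x + x) = x := by
  have h : (0 : EReal) ≤ ((1 / 2 : ℝ) : EReal) := EReal.coe_nonneg.2 (by norm_num)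
  rw [left_distrib_of_nonneg_of_ne_top h (coe_ne_top _), ← right_distrib_of_nonneg h h,
    ← coe_add]
  norm_num

lemma half_mul_ne_top_iff {x : EReal} : ((1 / 2 : ℝ) : EReal) * x ≠ ⊤ ↔ x ≠ ⊤ := by
  induction x with
  | bot => simp [coe_mul_bot_of_pos]
  | coe r => simp [← coe_mul]
  | top => simp [coe_mul_top_of_pos]

lemma coe_sub_le_comm {c : ℝ} {u v : EReal} (h : (c : EReal) - u ≤ v) :
    (c : EReal) - v ≤ u := by
  induction u <;> induction v <;> simp_all [← coe_sub]
  linarith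

lemma coe_sub_half_mul_add_le {c : ℝ} {u v : EReal} (hu : u ≠ ⊥) (hv : v ≠ ⊥) :
    (c : EReal) - ((1 / 2 : ℝ) : EReal) * (u + v)
      ≤ ((1 / 2 : ℝ) : EReal) * ((c - u) + (c - v)) := by
  induction u <;> induction v <;>
    simp_all [coe_mul_top_of_pos, ← coe_add, ← coe_sub, ← coe_mul]
  linarith

end EReal

lemma le_of_forall_add_mul_le {α β γ : ℝ}
    (h : ∀ t : ℝ, 0 < t → t ≤ 1 → α + t * β ≤ γ) : α ≤ γ := by
  have hlim : Tendsto (fun t : ℝ => α + t * β) (𝓝[>] 0) (𝓝 α) := by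
    have : Tendsto (fun t : ℝ => α + t * β) (𝓝 0) (𝓝 (α + 0 * β)) :=
      (continuous_const.add (continuous_id.mul continuous_const)).tendsto 0
    simpa using this.mono_left nhdsWithin_le_nhds
  refine le_of_tendsto hlim ?_
  filter_upwards [Ioc_mem_nhdsGT one_pos] with t ht using h t ht.1 ht.2

section Convexity

variable {E : Type*} [AddCommMonoid E] [Module ℝ E]

lemma EConvexOn.add {f g : E → EReal} (hf : EConvexOn f) (hg : EConvexOn g) :
    EConvexOn (fun x => f x + g x) := by
  intro x y a b ha hb hab
  have distrib (c : ℝ) (hc : 0 ≤ c) := EReal.left_distrib_of_nonneg_of_ne_top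
    (EReal.coe_nonneg.2 hc) (EReal.coe_ne_top c)
  calc f (a • x + b • y) + g (a • x + b • y)
      ≤ (a * f x + b * f y) + (a * g x + b * g y) :=
        add_le_add (hf x y a b ha hb hab) (hg x y a b ha hb hab)
    _ = a * (f x + g x) + b * (f y + g y) := by
        rw [distrib a ha, distrib b hb]; ac_rfl

lemma EConvexOn.const_mul {f : E → EReal} (hf : EConvexOn f) {c : ℝ} (hc : 0 ≤ c) :
    EConvexOn (fun x => (c : EReal) * f x) := by
  intro x y a b ha hb hab
  calc (c : EReal) * f (a • x + b • y) ≤ c * (a * f x + b * f y) :=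
        mul_le_mul_of_nonneg_left (hf x y a b ha hb hab) (EReal.coe_nonneg.2 hc)
    _ = a * (c * f x) + b * (c * f y) := by
        rw [EReal.left_distrib_of_nonneg_of_ne_top (EReal.coe_nonneg.2 hc) (EReal.coe_ne_top c),
          mul_left_comm, mul_left_comm (c : EReal)]

lemma econvexOn_iSup {ι : Sort*} {f : ι → E → EReal} (hf : ∀ i, EConvexOn (f i)) :
    EConvexOn (fun x => ⨆ i, f i x) := by
  intro x y a b ha hb hab
  refine iSup_le fun i => (hf i x y a b ha hb hab).trans (add_le_add ?_ ?_)
  · exact mul_le_mul_of_nonneg_left (le_iSup (f · x) i) (EReal.coe_nonneg.2 ha)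
  · exact mul_le_mul_of_nonneg_left (le_iSup (f · y) i) (EReal.coe_nonneg.2 hb)

lemma econvexOn_coe_sub {φ : E → ℝ} (hφ : IsLinearMap ℝ φ) (c : EReal) :
    EConvexOn (fun x => (φ x : EReal) - c) := by
  intro x y a b ha hb hab
  dsimp only
  rw [hφ.map_add, hφ.map_smul, hφ.map_smul, smul_eq_mul, smul_eq_mul]
  induction c with
  | bot =>
    rw [EReal.coe_sub_bot, EReal.coe_sub_bot, EReal.coe_sub_bot,
      ← EReal.right_distrib_of_nonneg (EReal.coe_nonneg.2 ha) (EReal.coe_nonneg.2 hb),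
      ← EReal.coe_add, hab, EReal.coe_one, one_mul]
  | coe r =>
    simp only [← EReal.coe_sub, ← EReal.coe_mul, ← EReal.coe_add, EReal.coe_le_coe_iff]
    exact le_of_eq (by linear_combination r * hab)
  | top => simp

end Convexity

section Conjugate

variable {g g' : X × StrongDual ℝ X → EReal}

lemma isLinearMap_symmPairing (w : X × StrongDual ℝ X) :
    IsLinearMap ℝ fun z : X × StrongDual ℝ X => z.2 w.1 + w.2 z.1 where
  map_add u v := by
    simp only [Prod.fst_add, Prod.snd_add, add_apply, map_add]; ring
  map_smul c u := by
    simp only [Prod.smul_fst, Prod.smul_snd, smul_apply, map_smul, smul_eq_mul]; ring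

lemma econvexOn_conjI (g : X × StrongDual ℝ X → EReal) : EConvexOn (conjI g) :=
  econvexOn_iSup fun w => econvexOn_coe_sub (isLinearMap_symmPairing w) (g w)

lemma le_conjI (g : X × StrongDual ℝ X → EReal) (z w : X × StrongDual ℝ X) :
    ((z.2 w.1 + w.2 z.1 : ℝ) : EReal) - g w ≤ conjI g z :=
  le_iSup (fun w => ((z.2 w.1 + w.2 z.1 : ℝ) : EReal) - g w) w

lemma conjI_anti (hgg' : ∀ w, g w ≤ g' w) (z : X × StrongDual ℝ X) :
    conjI g' z ≤ conjI g z :=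
  iSup_mono fun w => EReal.sub_le_sub le_rfl (hgg' w)

lemma conjI_conjI_le (g : X × StrongDual ℝ X → EReal) (z : X × StrongDual ℝ X) :
    conjI (conjI g) z ≤ g z :=
  iSup_le fun w => EReal.coe_sub_le_comm (by simpa only [add_comm] using le_conjI g w z)

lemma conjI_half_mul_add_le {f k : X × StrongDual ℝ X → EReal} (hf : ∀ w, f w ≠ ⊥)
    (hk : ∀ w, k w ≠ ⊥) (z : X × StrongDual ℝ X) :
    conjI (fun w => ((1 / 2 : ℝ) : EReal) * (f w + k w)) z
      ≤ ((1 / 2 : ℝ) : EReal) * (conjI f z + conjI k z) :=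
  iSup_le fun w => (EReal.coe_sub_half_mul_add_le (hf w) (hk w)).trans <|
    mul_le_mul_of_nonneg_left (add_le_add (le_conjI f z w) (le_conjI k z w)) (by norm_num)

lemma econvexOn_Amap (hg : EConvexOn g) : EConvexOn (Amap g) :=
  (hg.add (econvexOn_conjI g)).const_mul (by norm_num)

lemma conjI_Amap_le (hg : ∀ w, g w ≠ ⊥) (hc : ∀ w, conjI g w ≠ ⊥) (z : X × StrongDual ℝ X) :
    conjI (Amap g) z ≤ Amap g z :=
  calc conjI (Amap g) z ≤ ((1 / 2 : ℝ) : EReal) * (conjI g z + conjI (conjI g) z) :=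
        conjI_half_mul_add_le hg hc z
    _ ≤ ((1 / 2 : ℝ) : EReal) * (conjI g z + g z) :=
        mul_le_mul_of_nonneg_left (add_le_add le_rfl (conjI_conjI_le g z)) (by norm_num)
    _ = Amap g z := by rw [add_comm]; rfl

lemma Amap_le_of_conjI_le {z : X × StrongDual ℝ X} (hz : conjI g z ≤ g z) : Amap g z ≤ g z :=
  (mul_le_mul_of_nonneg_left (add_le_add le_rfl hz) (by norm_num)).trans_eq
    (EReal.half_mul_add_self (g z))

lemma Amap_ne_top_iff {z : X × StrongDual ℝ X} (hg : g z ≠ ⊥) (hc : conjI g z ≠ ⊥) :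
    Amap g z ≠ ⊤ ↔ g z ≠ ⊤ ∧ conjI g z ≠ ⊤ :=
  EReal.half_mul_ne_top_iff.trans (EReal.add_ne_top_iff_ne_top₂ hg hc)

lemma IsMaxMonotoneOp.pairing_le_conjI {T : X → Set (StrongDual ℝ X)} (hT : IsMaxMonotoneOp T)
    (hg : ∀ x p, p ∈ T x → g (x, p) = (pairing (x, p) : EReal)) (z : X × StrongDual ℝ X) :
    (pairing z : EReal) ≤ conjI g z := by
  obtain ⟨y, q, hq, hzq⟩ : ∃ y q, q ∈ T y ∧ pairing z ≤ z.2 y + q z.1 - q y := by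
    by_cases hz : ∀ y q, q ∈ T y → 0 ≤ (z.2 - q) (z.1 - y)
    · exact ⟨z.1, z.2, hT.2 _ _ hz, by simp [pairing]⟩
    · push Not at hz
      obtain ⟨y, q, hq, hlt⟩ := hz
      simp only [sub_apply, map_sub] at hlt
      exact ⟨y, q, hq, by simp only [pairing]; linarith⟩
  calc (pairing z : EReal) ≤ ((z.2 y + q z.1 - q y : ℝ) : EReal) := by exact_mod_cast hzq
    _ = ((z.2 (y, q).1 + (y, q).2 z.1 : ℝ) : EReal) - g (y, q) := by
        rw [hg y q hq, ← EReal.coe_sub]; rfl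
    _ ≤ conjI g z := le_conjI g z (y, q)

lemma pairing_smul_add_smul (z w : X × StrongDual ℝ X) (s t : ℝ) :
    pairing (s • z + t • w)
      = s ^ 2 * pairing z + s * t * (z.2 w.1 + w.2 z.1) + t ^ 2 * pairing w := by
  simp only [pairing, Prod.fst_add, Prod.snd_add, Prod.smul_fst, Prod.smul_snd,
    add_apply, smul_apply, map_add, map_smul, smul_eq_mul]
  ring

lemma conjI_le_pairing_of_eq (hconv : EConvexOn g) (hge : ∀ z, (pairing z : EReal) ≤ g z)
    {z : X × StrongDual ℝ X} (hz : g z = pairing z) : conjI g z ≤ pairing z := by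
  refine iSup_le fun w => ?_
  obtain hw | hw := eq_or_ne (g w) ⊤
  · simp [hw]
  lift g w to ℝ using ⟨hw, ((EReal.bot_lt_coe _).trans_le (hge w)).ne'⟩ with r hr
  rw [← EReal.coe_sub, EReal.coe_le_coe_iff]
  -- Divide `π ≤ g ≤ (1 - t) g z + t g w` on the segment `(1 - t) • z + t • w` by `t`, let `t → 0`.
  refine le_of_forall_add_mul_le (β := pairing w - (z.2 w.1 + w.2 z.1) + pairing z)
    fun t ht0 ht1 => le_of_mul_le_mul_left ?_ ht0
  have hseg : (pairing ((1 - t) • z + t • w) : EReal) ≤ ((1 - t) * pairing z + t * r : ℝ) :=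
    calc _ ≤ g ((1 - t) • z + t • w) := hge _
      _ ≤ ((1 - t : ℝ) : EReal) * g z + (t : EReal) * g w :=
          hconv z w (1 - t) t (by linarith) ht0.le (by ring)
      _ = _ := by rw [hz, ← hr]; norm_cast
  rw [EReal.coe_le_coe_iff, pairing_smul_add_smul] at hseg
  linarith

end Conjugate

lemma AinfMap_le_iterate (g : X × StrongDual ℝ X → EReal) (m : ℕ) (z : X × StrongDual ℝ X) :
    AinfMap g z ≤ Amap^[m + 1] g z :=
  iInf_le (fun n => Amap^[n + 1] g z) m

/-- `H(T)` without the lower semicontinuity requirement. -/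
structure IsConvexRepresentative (T : X → Set (StrongDual ℝ X))
    (g : X × StrongDual ℝ X → EReal) : Prop where
  convex : EConvexOn g
  pairing_le : ∀ z, (pairing z : EReal) ≤ g z
  eq_pairing : ∀ x p, p ∈ T x → g (x, p) = (pairing (x, p) : EReal)

namespace IsConvexRepresentative

variable {T : X → Set (StrongDual ℝ X)} {g : X × StrongDual ℝ X → EReal}

lemma ne_bot (hg : IsConvexRepresentative T g) (z : X × StrongDual ℝ X) : g z ≠ ⊥ :=
  ((EReal.bot_lt_coe _).trans_le (hg.pairing_le z)).ne'

lemma pairing_le_conjI (hg : IsConvexRepresentative T g) (hT : IsMaxMonotoneOp T)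
    (z : X × StrongDual ℝ X) : (pairing z : EReal) ≤ conjI g z :=
  hT.pairing_le_conjI hg.eq_pairing z

lemma conjI_ne_bot (hg : IsConvexRepresentative T g) (hT : IsMaxMonotoneOp T)
    (z : X × StrongDual ℝ X) : conjI g z ≠ ⊥ :=
  ((EReal.bot_lt_coe _).trans_le (hg.pairing_le_conjI hT z)).ne'

lemma conjI_Amap_le (hg : IsConvexRepresentative T g) (hT : IsMaxMonotoneOp T)
    (z : X × StrongDual ℝ X) : conjI (Amap g) z ≤ Amap g z :=
  _root_.conjI_Amap_le hg.ne_bot (hg.conjI_ne_bot hT) z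

lemma amap (hg : IsConvexRepresentative T g) (hT : IsMaxMonotoneOp T) :
    IsConvexRepresentative T (Amap g) where
  convex := econvexOn_Amap hg.convex
  pairing_le z :=
    calc (pairing z : EReal) = ((1 / 2 : ℝ) : EReal) * (pairing z + pairing z) :=
          (EReal.half_mul_add_self _).symm
      _ ≤ Amap g z := mul_le_mul_of_nonneg_left
          (add_le_add (hg.pairing_le z) (hg.pairing_le_conjI hT z)) (by norm_num)
  eq_pairing x p hp := by
    have hc : conjI g (x, p) = pairing (x, p) :=
      le_antisymm (conjI_le_pairing_of_eq hg.convex hg.pairing_le (hg.eq_pairing x p hp))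
        (hg.pairing_le_conjI hT (x, p))
    change ((1 / 2 : ℝ) : EReal) * (g (x, p) + conjI g (x, p)) = _
    rw [hc, hg.eq_pairing x p hp, EReal.half_mul_add_self]

lemma iterate (hg : IsConvexRepresentative T g) (hT : IsMaxMonotoneOp T) (n : ℕ) :
    IsConvexRepresentative T (Amap^[n] g) := by
  induction n with
  | zero => exact hg
  | succ n ih => rw [Function.iterate_succ_apply']; exact ih.amap hT

lemma conjI_Amap_iterate_succ_le (hg : IsConvexRepresentative T g) (hT : IsMaxMonotoneOp T)
    (n : ℕ) (z : X × StrongDual ℝ X) :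
    conjI (Amap^[n + 1] g) z ≤ Amap^[n + 1] g z := by
  rw [Function.iterate_succ_apply']
  exact (hg.iterate hT n).conjI_Amap_le hT z

lemma antitone_Amap_iterate_succ (hg : IsConvexRepresentative T g) (hT : IsMaxMonotoneOp T)
    (z : X × StrongDual ℝ X) : Antitone fun n => Amap^[n + 1] g z :=
  antitone_nat_of_succ_le fun n => by
    rw [Function.iterate_succ_apply' _ (n + 1)]
    exact Amap_le_of_conjI_le (hg.conjI_Amap_iterate_succ_le hT n z)

lemma conjI_Amap_iterate_le (hg : IsConvexRepresentative T g) (hT : IsMaxMonotoneOp T)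
    (m k : ℕ) (z : X × StrongDual ℝ X) :
    conjI (Amap^[m + 1] g) z ≤ Amap^[k + 1] g z := by
  rcases le_total m k with hmk | hkm
  · exact (conjI_anti (fun w => hg.antitone_Amap_iterate_succ hT w hmk) z).trans
      (hg.conjI_Amap_iterate_succ_le hT k z)
  · exact (hg.conjI_Amap_iterate_succ_le hT m z).trans
      (hg.antitone_Amap_iterate_succ hT z hkm)

lemma conjI_le_AinfMap (hg : IsConvexRepresentative T g) (hT : IsMaxMonotoneOp T)
    (m : ℕ) (z : X × StrongDual ℝ X) :
    conjI (Amap^[m + 1] g) z ≤ AinfMap g z :=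
  le_iInf fun k => hg.conjI_Amap_iterate_le hT m k z

lemma AinfMap_ne_top_iff (hg : IsConvexRepresentative T g) (hT : IsMaxMonotoneOp T)
    (z : X × StrongDual ℝ X) :
    AinfMap g z ≠ ⊤ ↔ g z ≠ ⊤ ∧ conjI g z ≠ ⊤ := by
  rw [← Amap_ne_top_iff (hg.ne_bot z) (hg.conjI_ne_bot hT z)]
  refine ⟨fun hinf => ?_, fun h1 => ne_top_of_le_ne_top h1 (AinfMap_le_iterate g 0 z)⟩
  obtain ⟨n, hn⟩ : ∃ n, Amap^[n + 1] g z ≠ ⊤ := by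
    simpa only [AinfMap, ne_eq, iInf_eq_top, not_forall] using hinf
  induction n with
  | zero => exact hn
  | succ n ih =>
    rw [Function.iterate_succ_apply'] at hn
    exact ih ((Amap_ne_top_iff ((hg.iterate hT _).ne_bot z)
      ((hg.iterate hT _).conjI_ne_bot hT z)).1 hn).1

end IsConvexRepresentative

theorem statement11_general (T : X → Set (StrongDual ℝ X)) (hT : IsMaxMonotoneOp T)
    (h : X × StrongDual ℝ X → EReal) (hF : InFitzFamily T h) :
    (∀ z : X × StrongDual ℝ X, ∀ n : ℕ, 1 ≤ n →
        conjI (Amap^[n] h) z ≤ AinfMap h z ∧ AinfMap h z ≤ Amap^[n] h z) ∧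
      {z : X × StrongDual ℝ X | AinfMap h z ≠ ⊤} =
        {z | h z ≠ ⊤} ∩ {z | conjI h z ≠ ⊤} := by
  have hh : IsConvexRepresentative T h := ⟨hF.2.1, hF.2.2.1, hF.2.2.2⟩
  refine ⟨fun z n hn => ?_, Set.ext fun z => hh.AinfMap_ne_top_iff hT z⟩
  obtain ⟨m, rfl⟩ := Nat.exists_eq_add_of_le' hn
  exact ⟨hh.conjI_le_AinfMap hT m z, AinfMap_le_iterate h m z⟩

/-- `(Aⁿh)* ∘ i ≤ A^∞ h ≤ Aⁿh` for all `n ≥ 1`, and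
`dom(A^∞ h) = dom(h) ∩ dom(h* ∘ i)`. -/
theorem statement11 (T : X → Set (StrongDual ℝ X)) (hT : IsMaxMonotoneOp T)
    (h : X × StrongDual ℝ X → EReal) (hF : InFitzFamily T h) (hproper : EProper h) :
    (∀ z : X × StrongDual ℝ X, ∀ n : ℕ, 1 ≤ n →
        conjI (Amap^[n] h) z ≤ AinfMap h z ∧ AinfMap h z ≤ Amap^[n] h z) ∧
      {z : X × StrongDual ℝ X | AinfMap h z ≠ ⊤} =
        {z | h z ≠ ⊤} ∩ {z | conjI h z ≠ ⊤} :=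
  statement11_general T hT h hF
end
end

section
/- Given h ∈ H(T) with (A h)(x,x*) and ((A h)* ∘ i)(x,x*) both finite, and ε > 0, for n > 1 + log₂((A h)(x,x*) - ((A h)* ∘ i)(x,x*)) - log₂ ε one has (Aⁿ h)(x,x*) - ε ≤ (A^∞ h)(x,x*) ≤ (Aⁿ h)(x,x*). -/
open NormedSpace

noncomputable section

variable {X : Type*} [NormedAddCommGroup X] [NormedSpace ℝ X]

/-!
Put `gⱼ = Aʲ⁺¹ h`. Every `gⱼ` dominates its own `gⱼ* ∘ i`, so `gⱼ₊₁ = ½ (gⱼ + gⱼ* ∘ i) ≤ gⱼ`: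
the `gⱼ` decrease, the `gⱼ* ∘ i` increase, and therefore each `gₘ* ∘ i` lies below every `gⱼ`,
hence below `A^∞ h`. At `z` the gap `gⱼ - gⱼ* ∘ i` at least halves at each step, so it is at most
`2⁻ʲ (a - b)`, which is `≤ ε` for `j = n - 1` by the choice of `n`.
-/

section Amap

variable {g g₁ g₂ : X × StrongDual ℝ X → EReal}

lemma conjI_anti_s13 (hle : g₁ ≤ g₂) : conjI g₂ ≤ conjI g₁ :=
  fun _ => iSup_mono fun w => EReal.sub_le_sub le_rfl (hle w)

lemma coupling_sub_le_conjI (z w : X × StrongDual ℝ X) :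
    ((z.2 w.1 + w.2 z.1 : ℝ) : EReal) - g w ≤ conjI g z :=
  le_iSup (fun u => ((z.2 u.1 + u.2 z.1 : ℝ) : EReal) - g u) w

lemma conjI_ne_bot (hg : EProper g) (z : X × StrongDual ℝ X) : conjI g z ≠ ⊥ := by
  obtain ⟨⟨x₀, hx₀⟩, hbot⟩ := hg
  lift g x₀ to ℝ using ⟨hx₀, hbot x₀⟩ with r hr
  refine ne_bot_of_le_ne_bot ?_ (coupling_sub_le_conjI (g := g) z x₀)
  rw [← hr, ← EReal.coe_sub]
  exact EReal.coe_ne_bot _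

lemma Amap_ne_bot (hg : EProper g) (z : X × StrongDual ℝ X) : Amap g z ≠ ⊥ := by
  have hsum : g z + conjI g z ≠ ⊥ := by
    rw [Ne, EReal.add_eq_bot_iff, not_or]
    exact ⟨hg.2 z, conjI_ne_bot hg z⟩
  exact (EReal.mul_ne_bot _ _).2
    ⟨.inl (EReal.coe_ne_bot _), .inr hsum, .inl (EReal.coe_ne_top _), .inl (by norm_num)⟩

lemma coupling_le_conjI_add (hg : EProper g) (z w : X × StrongDual ℝ X) :
    ((z.2 w.1 + w.2 z.1 : ℝ) : EReal) ≤ conjI g z + g w :=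
  (EReal.sub_le_iff_le_add (.inl (hg.2 w)) (.inr (conjI_ne_bot hg z))).1
    (coupling_sub_le_conjI z w)

lemma half_mul_add_self (x : EReal) : (((1 : ℝ) / 2 : ℝ) : EReal) * (x + x) = x := by
  rw [EReal.left_distrib_of_nonneg_of_ne_top (by norm_num) (EReal.coe_ne_top _),
    ← EReal.right_distrib_of_nonneg (by norm_num) (by norm_num), ← EReal.coe_add]
  norm_num

/-- Summing the Fenchel–Young inequalities for `g` at `(z, w)` and at `(w, z)` bounds the
coupling of `z` and `w` by `Amap g z + Amap g w`. -/
lemma conjI_Amap_le_Amap (hg : EProper g) : conjI (Amap g) ≤ Amap g := by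
  intro z
  refine iSup_le fun w => ?_
  rw [EReal.sub_le_iff_le_add (.inl (Amap_ne_bot hg w)) (.inr (Amap_ne_bot hg z))]
  have hzw := coupling_le_conjI_add hg z w
  have hwz := coupling_le_conjI_add hg w z
  rw [add_comm (w.2 z.1)] at hwz
  calc ((z.2 w.1 + w.2 z.1 : ℝ) : EReal)
      = (((1 : ℝ) / 2 : ℝ) : EReal) * (((z.2 w.1 + w.2 z.1 : ℝ) : EReal) +
          ((z.2 w.1 + w.2 z.1 : ℝ) : EReal)) := (half_mul_add_self _).symm
    _ ≤ (((1 : ℝ) / 2 : ℝ) : EReal) * ((conjI g z + g w) + (conjI g w + g z)) :=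
        mul_le_mul_of_nonneg_left (add_le_add hzw hwz) (by norm_num)
    _ = Amap g z + Amap g w := by
        rw [Amap, Amap, ← EReal.left_distrib_of_nonneg_of_ne_top (by norm_num)
          (EReal.coe_ne_top _)]
        ac_rfl

lemma Amap_le_self (hgc : conjI g ≤ g) : Amap g ≤ g := fun z =>
  calc Amap g z ≤ (((1 : ℝ) / 2 : ℝ) : EReal) * (g z + g z) :=
        mul_le_mul_of_nonneg_left (add_le_add le_rfl (hgc z)) (by norm_num)
    _ = g z := half_mul_add_self _

end Amap

lemma sub_le_div_two_pow_of_average {α β : ℕ → ℝ} (hβ : Monotone β)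
    (hα : ∀ j, α (j + 1) = (α j + β j) / 2) (j : ℕ) :
    α j - β j ≤ (α 0 - β 0) / 2 ^ j := by
  induction j with
  | zero => simp
  | succ j ih =>
    have hβj := hβ j.le_succ
    rw [hα j, pow_succ, ← div_div]
    linarith

lemma div_two_pow_le_of_logb_sub_lt {d ε : ℝ} (hε : 0 < ε) {m : ℕ}
    (hm : Real.logb 2 d - Real.logb 2 ε < m) : d / 2 ^ m ≤ ε := by
  rcases le_or_gt d 0 with hd | hd
  · exact (div_nonpos_of_nonpos_of_nonneg hd (by positivity)).trans hε.le
  · rw [div_le_iff₀ (by positivity)]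
    refine le_of_lt ((Real.logb_lt_logb_iff one_lt_two hd (by positivity)).1 ?_)
    rw [Real.logb_mul hε.ne' (by positivity), Real.logb_pow, Real.logb_self_eq_one one_lt_two]
    linarith

section Iterate

variable {g : X × StrongDual ℝ X → EReal}

lemma EProper.Amap (hg : EProper g) (hgc : conjI g ≤ g) : EProper (Amap g) :=
  ⟨hg.1.imp fun _ hx => ne_top_of_le_ne_top hx (Amap_le_self hgc _), Amap_ne_bot hg⟩

lemma iterate_Amap_invariant (hg : EProper g) (hgc : conjI g ≤ g) (j : ℕ) :
    EProper (Amap^[j] g) ∧ conjI (Amap^[j] g) ≤ Amap^[j] g := by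
  induction j with
  | zero => exact ⟨hg, hgc⟩
  | succ j ih =>
    rw [Function.iterate_succ_apply']
    exact ⟨ih.1.Amap ih.2, conjI_Amap_le_Amap ih.1⟩

lemma antitone_iterate_Amap (hg : EProper g) (hgc : conjI g ≤ g) :
    Antitone fun j => Amap^[j] g :=
  antitone_nat_of_succ_le fun j => by
    rw [Function.iterate_succ_apply']
    exact Amap_le_self (iterate_Amap_invariant hg hgc j).2

lemma conjI_iterate_le_iterate (hg : EProper g) (hgc : conjI g ≤ g) (j k : ℕ) :
    conjI (Amap^[k] g) ≤ Amap^[j] g := by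
  have hanti := antitone_iterate_Amap hg hgc
  rcases le_total j k with hjk | hkj
  · exact (iterate_Amap_invariant hg hgc k).2.trans (hanti hjk)
  · exact (conjI_anti_s13 (hanti hkj)).trans (iterate_Amap_invariant hg hgc j).2

lemma iterate_Amap_sub_le_conjI (hg : EProper g) (hgc : conjI g ≤ g) {z : X × StrongDual ℝ X}
    {a b : ℝ} (ha : g z = a) (hb : conjI g z = b) (j : ℕ) :
    Amap^[j] g z - ((a - b) / 2 ^ j : ℝ) ≤ conjI (Amap^[j] g) z := by
  have hanti := antitone_iterate_Amap hg hgc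
  have hgz : g z ≠ ⊤ := ha ▸ EReal.coe_ne_top a
  have hconj_gz : conjI g z ≠ ⊥ := hb ▸ EReal.coe_ne_bot b
  set α : ℕ → ℝ := fun k => (Amap^[k] g z).toReal
  set β : ℕ → ℝ := fun k => (conjI (Amap^[k] g) z).toReal
  have hα : ∀ k, (α k : EReal) = Amap^[k] g z := fun k =>
    EReal.coe_toReal (ne_top_of_le_ne_top hgz (hanti k.zero_le z))
      ((iterate_Amap_invariant hg hgc k).1.2 z)
  have hβ : ∀ k, (β k : EReal) = conjI (Amap^[k] g) z := fun k =>
    EReal.coe_toReal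
      (ne_top_of_le_ne_top hgz (conjI_iterate_le_iterate hg hgc 0 k z))
      (ne_bot_of_le_ne_bot hconj_gz (conjI_anti_s13 (hanti k.zero_le) z))
  have hβ_mono : Monotone β := fun k l hkl => by
    rw [← EReal.coe_le_coe_iff, hβ, hβ]
    exact conjI_anti_s13 (hanti hkl) z
  have hα_average : ∀ k, α (k + 1) = (α k + β k) / 2 := fun k => by
    rw [← EReal.coe_eq_coe_iff, hα, Function.iterate_succ_apply', Amap, ← hα, ← hβ,
      ← EReal.coe_add, ← EReal.coe_mul]
    ring_nf
  have hgap := sub_le_div_two_pow_of_average hβ_mono hα_average j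
  have hα₀ : α 0 = a := by simp only [α, Function.iterate_zero, id_eq, ha, EReal.toReal_coe]
  have hβ₀ : β 0 = b := by simp only [β, Function.iterate_zero, id_eq, hb, EReal.toReal_coe]
  rw [← hα, ← hβ, ← EReal.coe_sub, EReal.coe_le_coe_iff, ← hα₀, ← hβ₀]
  linarith

end Iterate

theorem statement13_general (h : X × StrongDual ℝ X → EReal) (hproper : EProper h)
    (z : X × StrongDual ℝ X) (a b : ℝ)
    (ha : Amap h z = (a : EReal)) (hb : conjI (Amap h) z = (b : EReal))
    (ε : ℝ) (hε : 0 < ε) (n : ℕ) (hn1 : 1 ≤ n)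
    (hn : (n : ℝ) > 1 + Real.logb 2 (a - b) - Real.logb 2 ε) :
    Amap^[n] h z - (ε : EReal) ≤ AinfMap h z ∧ AinfMap h z ≤ Amap^[n] h z := by
  obtain ⟨m, rfl⟩ := Nat.exists_eq_add_of_le' hn1
  have hg : EProper (Amap h) := ⟨⟨z, ha ▸ EReal.coe_ne_top a⟩, Amap_ne_bot hproper⟩
  have hgc : conjI (Amap h) ≤ Amap h := conjI_Amap_le_Amap hproper
  have hε' : (a - b) / 2 ^ m ≤ ε := div_two_pow_le_of_logb_sub_lt hε (by push_cast at hn; linarith)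
  refine ⟨?_, iInf_le (fun j => Amap^[j + 1] h z) m⟩
  calc Amap^[m + 1] h z - (ε : EReal)
      ≤ Amap^[m] (Amap h) z - ((a - b) / 2 ^ m : ℝ) :=
        EReal.sub_le_sub le_rfl (EReal.coe_le_coe_iff.2 hε')
    _ ≤ conjI (Amap^[m] (Amap h)) z := iterate_Amap_sub_le_conjI hg hgc ha hb m
    _ ≤ AinfMap h z := le_iInf fun j => conjI_iterate_le_iterate hg hgc j m z

/-- stopping criterion for the iteration `Aⁿh`. -/
theorem statement13 (T : X → Set (StrongDual ℝ X)) (hT : IsMaxMonotoneOp T)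
    (h : X × StrongDual ℝ X → EReal) (hF : InFitzFamily T h) (hproper : EProper h)
    (z : X × StrongDual ℝ X) (a b : ℝ)
    (ha : Amap h z = (a : EReal)) (hb : conjI (Amap h) z = (b : EReal))
    (ε : ℝ) (hε : 0 < ε) (n : ℕ) (hn1 : 1 ≤ n)
    (hn : (n : ℝ) > 1 + Real.logb 2 (a - b) - Real.logb 2 ε) :
    Amap^[n] h z - (ε : EReal) ≤ AinfMap h z ∧ AinfMap h z ≤ Amap^[n] h z :=
  statement13_general h hproper z a b ha hb ε hε n hn1 hn
end
end

section
/- Let f be proper lsc convex and h ∈ H(∂f) with h ≤ f^{FY}. Then for all ε > 0 and x, the enlargement T̆_h(ε/2, x) is contained in the ε-subdifferential: T̆_h(ε/2, x) ⊆ ∂_ε f(x). -/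
open NormedSpace

noncomputable section

variable {X : Type*} [NormedAddCommGroup X] [NormedSpace ℝ X]

/-! Since `h ≤ f^{FY}`, conjugation reverses the inequality:
`h*(x*, x) ≥ (f^{FY})*(x*, x) = f**(x) + f*(x*) = f(x) + f*(x*)`, the last step being
Fenchel–Moreau, obtained by separating points below the graph of `f` from its closed convex
epigraph. Adding `h(x, x*) ≥ ⟨x, x*⟩` gives
`⟨x, x*⟩ + f^{FY}(x, x*) ≤ h(x, x*) + h*(x*, x) ≤ 2⟨x, x*⟩ + ε` on `T̆_h(ε/2, x)`,
that is `f^{FY}(x, x*) ≤ ⟨x, x*⟩ + ε`, which is `x* ∈ ∂_ε f(x)`. -/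

section Epigraph

variable {E : Type*} {f : E → EReal}

theorem LowerSemicontinuous.isClosed_realEpigraph [TopologicalSpace E]
    (hf : LowerSemicontinuous f) : IsClosed {z : E × ℝ | f z.1 ≤ z.2} :=
  hf.isClosed_epigraph.preimage
    (continuous_fst.prodMk (continuous_coe_real_ereal.comp continuous_snd))

theorem EConvexOn.convex_realEpigraph [AddCommMonoid E] [Module ℝ E] (hf : EConvexOn f) :
    Convex ℝ {z : E × ℝ | f z.1 ≤ z.2} := by
  rintro ⟨y₁, t₁⟩ (h₁ : f y₁ ≤ t₁) ⟨y₂, t₂⟩ (h₂ : f y₂ ≤ t₂) a b ha hb hab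
  show f (a • y₁ + b • y₂) ≤ ((a * t₁ + b * t₂ : ℝ) : EReal)
  calc f (a • y₁ + b • y₂) ≤ (a : EReal) * f y₁ + (b : EReal) * f y₂ := hf y₁ y₂ a b ha hb hab
    _ ≤ (a : EReal) * t₁ + (b : EReal) * t₂ := by gcongr
    _ = ((a * t₁ + b * t₂ : ℝ) : EReal) := by norm_cast

variable [AddCommGroup E] [Module ℝ E] [TopologicalSpace E] [IsTopologicalAddGroup E]
  [ContinuousSMul ℝ E] [LocallyConvexSpace ℝ E]

theorem exists_separation_realEpigraph (hconv : EConvexOn f) (hlsc : LowerSemicontinuous f)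
    (hdom : ∃ x₀, f x₀ ≠ ⊤) {x : E} {r : ℝ} (hr : (r : EReal) < f x) :
    ∃ (q : StrongDual ℝ E) (s u : ℝ), s ≤ 0 ∧
      (∀ y (t : ℝ), f y ≤ t → q y + s * t < u) ∧ u < q x + s * r := by
  obtain ⟨g, u, hg, hgx⟩ := geometric_hahn_banach_closed_point (x := (x, r))
    hconv.convex_realEpigraph hlsc.isClosed_realEpigraph (not_le.2 hr)
  set q := g.comp (.inl ℝ E ℝ)
  set s := g (0, 1)
  have hg_apply (y : E) (t : ℝ) : g (y, t) = q y + s * t := by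
    rw [show (y, t) = ((y, 0) : E × ℝ) + t • ((0, 1) : E × ℝ) by simp, map_add, map_smul]
    simp [q, s, mul_comm]
  have hsep (y : E) (t : ℝ) (hyt : f y ≤ t) : q y + s * t < u := hg_apply y t ▸ hg (y, t) hyt
  refine ⟨q, s, u, ?_, hsep, hg_apply x r ▸ hgx⟩
  obtain ⟨x₀, hx₀⟩ := hdom
  obtain ⟨m, hm, -⟩ := EReal.exists_between_coe_real (lt_top_iff_ne_top.2 hx₀)
  by_contra! hs
  have hM := (div_le_iff₀ hs).1 (le_max_right m ((u - q x₀) / s))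
  have := hsep x₀ (max m ((u - q x₀) / s)) (hm.le.trans (by exact_mod_cast le_max_left _ _))
  linarith

end Epigraph

section Conjugate

variable {f : X → EReal}

theorem fconj_le_coe_iff {p : StrongDual ℝ X} {c : ℝ} :
    fconj f p ≤ c ↔ ∀ y (t : ℝ), f y ≤ t → p y - t ≤ c := by
  refine iSup_le_iff.trans (forall_congr' fun y => ?_)
  induction f y using EReal.rec with
  | bot => simpa using ⟨p y - c - 1, by linarith⟩
  | top => simp
  | coe a =>
    norm_cast
    exact ⟨fun h t ht => by linarith, fun h => h a le_rfl⟩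

theorem fconj_ne_bot (hdom : ∃ x₀, f x₀ ≠ ⊤) (p : StrongDual ℝ X) : fconj f p ≠ ⊥ := by
  obtain ⟨x₀, hx₀⟩ := hdom
  refine ne_bot_of_le_ne_bot ?_ (le_iSup (fun y => ((p y : ℝ) : EReal) - f y) x₀)
  generalize f x₀ = a at hx₀ ⊢
  induction a using EReal.rec with
  | bot => simp
  | top => exact absurd rfl hx₀
  | coe a => exact_mod_cast EReal.coe_ne_bot (p x₀ - a)

theorem fconj_inv_smul_le_of_separation {q : StrongDual ℝ X} {s u : ℝ} (hs : s < 0)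
    (hsep : ∀ y (t : ℝ), f y ≤ t → q y + s * t < u) :
    fconj f ((-s)⁻¹ • q) ≤ ((u / -s : ℝ) : EReal) := by
  refine fconj_le_coe_iff.2 fun y t hyt => ?_
  have := hsep y t hyt
  rw [FunLike.coe_smul, Pi.smul_apply, smul_eq_mul, ← div_eq_inv_mul, div_sub' (by linarith),
    div_le_div_iff_of_pos_right (by linarith)]
  linarith

theorem fconj_add_smul_le {p₀ q : StrongDual ℝ X} {c₀ u k : ℝ} (hp₀ : fconj f p₀ ≤ c₀)
    (hk : 0 ≤ k) (hq : ∀ y (t : ℝ), f y ≤ t → q y < u) :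
    fconj f (p₀ + k • q) ≤ ((c₀ + k * u : ℝ) : EReal) := by
  refine fconj_le_coe_iff.2 fun y t hyt => ?_
  have h₀ := fconj_le_coe_iff.1 hp₀ y t hyt
  have h₁ := mul_le_mul_of_nonneg_left (hq y t hyt).le hk
  simp only [FunLike.coe_add, Pi.add_apply, FunLike.coe_smul, Pi.smul_apply, smul_eq_mul]
  linarith

theorem exists_fconj_le (hproper : EProper f) (hconv : EConvexOn f)
    (hlsc : LowerSemicontinuous f) : ∃ (p : StrongDual ℝ X) (c : ℝ), fconj f p ≤ c := by
  obtain ⟨x₀, hx₀⟩ := hproper.1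
  set m := (f x₀).toReal
  have hm : f x₀ = m := (EReal.coe_toReal hx₀ (hproper.2 x₀)).symm
  obtain ⟨q, s, u, -, hsep, hsepx⟩ := exists_separation_realEpigraph hconv hlsc hproper.1
    (x := x₀) (r := m - 1) (by rw [hm]; exact_mod_cast sub_one_lt m)
  have hs : s < 0 := by linarith [hsep x₀ m hm.le]
  exact ⟨_, _, fconj_inv_smul_le_of_separation hs hsep⟩

/-- Fenchel–Moreau: below every value of `f` lies an affine minorant `p · - c` of `f`. -/
theorem exists_fconj_le_of_coe_lt (hproper : EProper f) (hconv : EConvexOn f)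
    (hlsc : LowerSemicontinuous f) {x : X} {r : ℝ} (hr : (r : EReal) < f x) :
    ∃ (p : StrongDual ℝ X) (c : ℝ), fconj f p ≤ c ∧ r < p x - c := by
  obtain ⟨q, s, u, hs, hsep, hsepx⟩ := exists_separation_realEpigraph hconv hlsc hproper.1 hr
  rcases hs.lt_or_eq with hs | rfl
  · refine ⟨_, _, fconj_inv_smul_le_of_separation hs hsep, ?_⟩
    rw [FunLike.coe_smul, Pi.smul_apply, smul_eq_mul, ← div_eq_inv_mul, ← sub_div,
      lt_div_iff₀ (by linarith)]
    linarith
  · -- a vertical hyperplane: tilt any affine minorant by a large multiple of `q`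
    simp only [zero_mul, add_zero] at hsep hsepx
    obtain ⟨p₀, c₀, hp₀⟩ := exists_fconj_le hproper hconv hlsc
    set k := max 0 ((r - p₀ x + c₀) / (q x - u)) + 1
    have hk : (r - p₀ x + c₀) / (q x - u) < k := by
      linarith [le_max_right 0 ((r - p₀ x + c₀) / (q x - u))]
    have hkd := (div_lt_iff₀ (sub_pos.2 hsepx)).1 hk
    refine ⟨_, _, fconj_add_smul_le (k := k) hp₀ (by positivity) hsep, ?_⟩
    simp only [FunLike.coe_add, Pi.add_apply, FunLike.coe_smul, Pi.smul_apply, smul_eq_mul]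
    nlinarith

theorem add_fconj_le_conjI (hproper : EProper f) (hconv : EConvexOn f)
    (hlsc : LowerSemicontinuous f) {h : X × StrongDual ℝ X → EReal} (hle : ∀ z, h z ≤ FYfn f z)
    (x : X) (p : StrongDual ℝ X) : f x + fconj f p ≤ conjI h (x, p) := by
  refine EReal.add_le_of_forall_lt fun a ha b hb => ?_
  obtain ⟨r, har, hr⟩ := EReal.exists_between_coe_real ha
  obtain ⟨q, c, hqc, hrc⟩ := exists_fconj_le_of_coe_lt hproper hconv hlsc hr
  obtain ⟨y, hy⟩ := lt_iSup_iff.1 hb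
  calc a + b ≤ ((q x - c : ℝ) : EReal) + (p y - f y) :=
        add_le_add (har.trans (by exact_mod_cast hrc)).le hy.le
    _ = ((p y + q x : ℝ) : EReal) - (f y + c) := by
        induction f y using EReal.rec with
        | bot => simp only [EReal.coe_sub_bot, EReal.coe_add_top, EReal.bot_add]
        | top => simp only [EReal.sub_top, EReal.add_bot, EReal.top_add_coe]
        | coe a => norm_cast; ring
    _ ≤ ((p y + q x : ℝ) : EReal) - h (y, q) :=
        EReal.sub_le_sub le_rfl ((hle (y, q)).trans (add_le_add le_rfl hqc))
    _ ≤ conjI h (x, p) :=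
        le_iSup (fun w : X × StrongDual ℝ X => ((p w.1 + w.2 x : ℝ) : EReal) - h w) (y, q)

theorem mem_epsSubdiff_of_add_fconj_le (hdom : ∃ x₀, f x₀ ≠ ⊤) {ε : ℝ} {x : X}
    {p : StrongDual ℝ X} (hfy : f x + fconj f p ≤ ((p x + ε : ℝ) : EReal)) :
    p ∈ epsSubdiff f ε x := by
  have hconj (y : X) : ((p y : ℝ) : EReal) - f y ≤ fconj f p :=
    le_iSup (fun y => ((p y : ℝ) : EReal) - f y) y
  unfold epsSubdiff
  generalize f x = a at hfy ⊢
  induction a using EReal.rec with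
  | bot => simp
  | top =>
    rw [EReal.top_add_of_ne_bot (fconj_ne_bot hdom p), top_le_iff] at hfy
    exact absurd hfy (EReal.coe_ne_top _)
  | coe m =>
    refine ⟨EReal.coe_ne_top m, fun y => ?_⟩
    have := (add_le_add le_rfl (hconj y)).trans hfy
    generalize f y = b at this ⊢
    induction b using EReal.rec with
    | bot =>
      rw [EReal.coe_sub_bot, EReal.coe_add_top, top_le_iff] at this
      exact absurd this (EReal.coe_ne_top _)
    | top => simp
    | coe n =>
      norm_cast at this ⊢
      rw [map_sub]
      linarith

end Conjugate

theorem add_conjI_le_of_Amap_le {h : X × StrongDual ℝ X → EReal} {z : X × StrongDual ℝ X}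
    {c : ℝ} (hA : Amap h z ≤ c) : h z + conjI h z ≤ ((2 * c : ℝ) : EReal) := by
  unfold Amap at hA
  generalize h z + conjI h z = a at hA ⊢
  induction a using EReal.rec with
  | bot => exact bot_le
  | top =>
    rw [EReal.coe_mul_top_of_pos (by norm_num), top_le_iff] at hA
    exact absurd hA (EReal.coe_ne_top _)
  | coe a =>
    norm_cast at hA ⊢
    linarith

/-- if `h ∈ H(∂f)` and `h ≤ f^{FY}`, then
`T̆_h(ε/2, x) ⊆ ∂_ε f(x)` for every `ε > 0`. -/
theorem statement19 (f : X → EReal) (hproper : EProper f)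
    (hconv : EConvexOn f) (hlsc : LowerSemicontinuous f)
    (h : X × StrongDual ℝ X → EReal)
    (hF : InFitzFamily (fun x => epsSubdiff f 0 x) h)
    (hle : ∀ z, h z ≤ FYfn f z) :
    ∀ ε : ℝ, 0 < ε → ∀ x : X, ∀ p : StrongDual ℝ X,
      Amap h (x, p) ≤ ((p x + ε / 2 : ℝ) : EReal) → p ∈ epsSubdiff f ε x := by
  intro ε _ x p hA
  refine mem_epsSubdiff_of_add_fconj_le hproper.1
    ((EReal.addLECancellable_coe (p x)).add_le_add_iff_left.1 ?_)
  calc ((p x : ℝ) : EReal) + (f x + fconj f p) ≤ h (x, p) + conjI h (x, p) :=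
        add_le_add (hF.2.2.1 (x, p)) (add_fconj_le_conjI hproper hconv hlsc hle x p)
    _ ≤ ((2 * (p x + ε / 2) : ℝ) : EReal) := add_conjI_le_of_Amap_le hA
    _ = ((p x : ℝ) : EReal) + ((p x + ε : ℝ) : EReal) := by norm_cast; ring
end
end
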